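/- Let H be an n × n Hermitian matrix with all eigenvalues in [c₂, c₁] and let τ > 0 satisfy c₂ ≤ 1/τ ≤ c₁. Then log n − S(ρ_H^τ) ≤ τ·(c₁ − min{c₁·exp(τ(c₂ − c₁)), c₂}). -/

import Mathlib

/-!
Since `min (c₁ e^{τ(c₂ - c₁)}) c₂ ≤ c₂`, it suffices to bound `log n - S` by `τ (c₁ - c₂)`.
Write `S = τ ⟨λ⟩ + log Z` with `Z = Σ e^{-τ λ_i}` and `⟨λ⟩` the Gibbs average of the eigenvalues.
An average of numbers `≥ c₂` is `≥ c₂`, and `Z ≥ n e^{-τ c₁}` gives `log n - log Z ≤ τ c₁`.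
-/

open Real Finset

/-- Gibbs-state entropy in terms of the eigenvalues `lam`:
`S(ρ_H^τ) = τ·(Σ_i λ_i e^{-τλ_i})/(Σ_i e^{-τλ_i}) + log(Σ_i e^{-τλ_i})`. -/
noncomputable def gibbsEntropy {m : Type*} [Fintype m] (τ : ℝ) (lam : m → ℝ) : ℝ :=
  τ * (∑ i, lam i * Real.exp (-τ * lam i)) / (∑ i, Real.exp (-τ * lam i)) +
    Real.log (∑ i, Real.exp (-τ * lam i))

section

variable {ι : Type*} [Fintype ι] [Nonempty ι]

lemma le_sum_mul_div_sum_of_le {w f : ι → ℝ} {c : ℝ} (hw : ∀ i, 0 < w i) (hf : ∀ i, c ≤ f i) :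
    c ≤ (∑ i, f i * w i) / ∑ i, w i := by
  rw [le_div_iff₀ (sum_pos (fun i _ => hw i) univ_nonempty), mul_sum]
  exact sum_le_sum fun i _ => mul_le_mul_of_nonneg_right (hf i) (hw i).le

omit [Nonempty ι] in
lemma card_mul_exp_le_sum_exp {τ c : ℝ} {lam : ι → ℝ} (hτ : 0 ≤ τ) (hlam : ∀ i, lam i ≤ c) :
    Fintype.card ι * exp (-τ * c) ≤ ∑ i, exp (-τ * lam i) := by
  rw [← nsmul_eq_mul, ← card_univ, ← sum_const]
  exact sum_le_sum fun i _ => exp_le_exp.2 (by nlinarith [hlam i])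

lemma log_card_sub_log_sum_exp_le {τ c : ℝ} {lam : ι → ℝ} (hτ : 0 ≤ τ) (hlam : ∀ i, lam i ≤ c) :
    log (Fintype.card ι) - log (∑ i, exp (-τ * lam i)) ≤ τ * c := by
  have hcard : (0 : ℝ) < Fintype.card ι := by exact_mod_cast Fintype.card_pos
  have h := log_le_log (by positivity) (card_mul_exp_le_sum_exp hτ hlam)
  rw [log_mul hcard.ne' (exp_ne_zero _), log_exp] at h
  linarith

lemma log_card_sub_gibbsEntropy_le {τ c₁ c₂ : ℝ} {lam : ι → ℝ} (hτ : 0 ≤ τ)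
    (hlam : ∀ i, c₂ ≤ lam i ∧ lam i ≤ c₁) :
    log (Fintype.card ι) - gibbsEntropy τ lam ≤ τ * (c₁ - c₂) := by
  have hmean : τ * c₂ ≤ τ * (∑ i, lam i * exp (-τ * lam i)) / ∑ i, exp (-τ * lam i) := by
    rw [mul_div_assoc]
    exact mul_le_mul_of_nonneg_left
      (le_sum_mul_div_sum_of_le (fun i => exp_pos _) fun i => (hlam i).1) hτ
  have hlog := log_card_sub_log_sum_exp_le hτ fun i => (hlam i).2
  rw [gibbsEntropy]
  linarith

end

theorem gibbs_entropy_bound_middle_tau_general (n : ℕ) (hn : 0 < n)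
    (H : Matrix (Fin n) (Fin n) ℂ) (hH : H.IsHermitian)
    (c₁ c₂ τ : ℝ) (hτ : 0 < τ)
    (hbound : ∀ i, c₂ ≤ hH.eigenvalues i ∧ hH.eigenvalues i ≤ c₁) :
    Real.log n - gibbsEntropy τ hH.eigenvalues ≤
      τ * (c₁ - min (c₁ * Real.exp (τ * (c₂ - c₁))) c₂) := by
  have : Nonempty (Fin n) := ⟨⟨0, hn⟩⟩
  calc Real.log n - gibbsEntropy τ hH.eigenvalues ≤ τ * (c₁ - c₂) := by
        simpa using log_card_sub_gibbsEntropy_le hτ.le hbound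
    _ ≤ τ * (c₁ - min (c₁ * Real.exp (τ * (c₂ - c₁))) c₂) := by
        gcongr
        exact min_le_right _ _

theorem gibbs_entropy_bound_middle_tau (n : ℕ) (hn : 0 < n)
    (H : Matrix (Fin n) (Fin n) ℂ) (hH : H.IsHermitian)
    (c₁ c₂ τ : ℝ) (hτ : 0 < τ)
    (hbound : ∀ i, c₂ ≤ hH.eigenvalues i ∧ hH.eigenvalues i ≤ c₁)
    (h1 : c₂ ≤ 1 / τ) (h2 : 1 / τ ≤ c₁) :
    Real.log n - gibbsEntropy τ hH.eigenvalues ≤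
      τ * (c₁ - min (c₁ * Real.exp (τ * (c₂ - c₁))) c₂) :=
  gibbs_entropy_bound_middle_tau_general n hn H hH c₁ c₂ τ hτ hbound
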